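/- arXiv:2403.18388 — 3 statements merged into one kernel-verified Lean document; each statement's English description precedes it below -/
import Mathlib

section
/- Consider an IF neuron with soft reset, threshold θ > 0, constant input I per time step with 0 ≤ I ≤ θ, and v[0] = 0. Then for every t ≥ 0 the membrane potential satisfies 0 ≤ v[t] < θ, and the cumulative spike count satisfies Σ_{k=1}^{T} s[k] = ⌊T·I/θ⌋ for all T ≥ 1. -/
/-!
Writing `x t = t * I / θ`, the potential is `v t = θ * fract (x t)`: a step adds `I / θ ≤ 1` to
the fractional part, which therefore wraps around at most once, and it wraps exactly when the
neuron fires. So `s (t + 1) = ⌊x (t + 1)⌋ - ⌊x t⌋`, and the spike count telescopes to `⌊x T⌋`.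
-/

open Finset

lemma Int.floor_add_of_nonneg_of_le_one {R : Type*} [CommRing R] [LinearOrder R]
    [IsStrictOrderedRing R] [FloorRing R] {y c : R} (hc0 : 0 ≤ c) (hc1 : c ≤ 1) :
    ⌊y + c⌋ = ⌊y⌋ + if 1 ≤ Int.fract y + c then 1 else 0 := by
  have hsplit : y + c = ⌊y⌋ + (Int.fract y + c) := by rw [← add_assoc, Int.floor_add_fract]
  rw [hsplit, Int.floor_intCast_add, add_right_inj, Int.floor_eq_iff]
  have := Int.fract_nonneg y
  have := Int.fract_lt_one y
  split_ifs <;> push_cast <;> constructor <;> linarith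

lemma Finset.sum_Icc_one_eq_sub {M : Type*} [AddCommGroup M] {s f : ℕ → M}
    (h : ∀ t, s (t + 1) = f (t + 1) - f t) (T : ℕ) : ∑ k ∈ Icc 1 T, s k = f T - f 0 := by
  induction T with
  | zero => simp
  | succ T ih => rw [sum_Icc_succ_top (by omega), ih, h]; abel

section SoftResetNeuron

variable {v s : ℕ → ℝ} {I θ : ℝ}

lemma spike_eq_floor_sub (hθ : 0 < θ) (hI0 : 0 ≤ I) (hIθ : I ≤ θ)
    (hspike : ∀ t, s (t + 1) = if θ ≤ v t + I then 1 else 0)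
    {t : ℕ} (hv : v t = θ * Int.fract (t * I / θ)) :
    s (t + 1) = ⌊((t + 1 : ℕ) : ℝ) * I / θ⌋ - ⌊(t : ℝ) * I / θ⌋ := by
  have hstep : ((t + 1 : ℕ) : ℝ) * I / θ = t * I / θ + I / θ := by push_cast; ring
  have hfire : θ ≤ v t + I ↔ 1 ≤ Int.fract (t * I / θ) + I / θ := by
    rw [hv, ← le_mul_iff_one_le_right hθ, mul_add, mul_div_cancel₀ _ hθ.ne']
  rw [hspike, hstep, Int.floor_add_of_nonneg_of_le_one (div_nonneg hI0 hθ.le)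
    ((div_le_one hθ).2 hIθ)]
  simp only [hfire]
  split_ifs <;> push_cast <;> ring

lemma potential_eq_mul_fract (hθ : 0 < θ) (hI0 : 0 ≤ I) (hIθ : I ≤ θ) (hv0 : v 0 = 0)
    (hspike : ∀ t, s (t + 1) = if θ ≤ v t + I then 1 else 0)
    (hdyn : ∀ t, v (t + 1) = v t + I - θ * s (t + 1)) (t : ℕ) :
    v t = θ * Int.fract (t * I / θ) := by
  induction t with
  | zero => simp [hv0]
  | succ t ih =>
    rw [hdyn, spike_eq_floor_sub hθ hI0 hIθ hspike ih, ih]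
    simp only [Int.fract]
    push_cast
    field_simp
    ring

end SoftResetNeuron

/-- Constant-input soft-reset IF neuron: the membrane potential stays in `[0, θ)` and the
cumulative spike count up to time `T` equals `⌊T·I/θ⌋`. -/
theorem if_neuron_constant_input (v s : ℕ → ℝ) (I θ : ℝ) (hθ : 0 < θ)
    (hI0 : 0 ≤ I) (hIθ : I ≤ θ) (hv0 : v 0 = 0)
    (hspike : ∀ t, s (t + 1) = if θ ≤ v t + I then 1 else 0)
    (hdyn : ∀ t, v (t + 1) = v t + I - θ * s (t + 1)) :
    (∀ t, 0 ≤ v t ∧ v t < θ) ∧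
    (∀ T : ℕ, 1 ≤ T →
      ∑ k ∈ Finset.Icc 1 T, s k = (⌊(T : ℝ) * I / θ⌋ : ℝ)) := by
  have hv := potential_eq_mul_fract hθ hI0 hIθ hv0 hspike hdyn
  refine ⟨fun t => ⟨?_, ?_⟩, fun T _ => ?_⟩
  · rw [hv]
    exact mul_nonneg hθ.le (Int.fract_nonneg _)
  · rw [hv]
    exact mul_lt_of_lt_one_right hθ (Int.fract_lt_one _)
  · have hcount := sum_Icc_one_eq_sub (f := fun t : ℕ => (⌊(t : ℝ) * I / θ⌋ : ℝ))
      (fun t => spike_eq_floor_sub hθ hI0 hIθ hspike (hv t)) T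
    simpa using hcount
end

section
/- Under the hypotheses of the constant-input IF neuron (v[0]=0, 0 ≤ I ≤ θ, soft reset), the firing rate converges: (θ/T)·Σ_{t=1}^{T} s[t] → I as T → ∞. -/
/-!
The reset keeps the membrane potential in `[0, θ)`, and summing the dynamics telescopes to
`θ · Σ_{t=1}^T s[t] = T·I - v[T]`. Dividing by `T`, the rate is `I - v[T]/T`, and the bounded
term `v[T]/T` vanishes in the limit.
-/

open Filter Finset Topology

lemma soft_reset_mem_Ico {I θ x : ℝ} (hI0 : 0 ≤ I) (hIθ : I ≤ θ) (hx : x ∈ Set.Ico 0 θ) :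
    x + I - θ * (if θ ≤ x + I then 1 else 0) ∈ Set.Ico 0 θ := by
  obtain ⟨hx0, hxθ⟩ := hx
  split_ifs with hfire
  · constructor <;> linarith
  · constructor <;> linarith

lemma potential_mem_Ico {v s : ℕ → ℝ} {I θ : ℝ} (hθ : 0 < θ) (hI0 : 0 ≤ I) (hIθ : I ≤ θ)
    (hv0 : v 0 = 0) (hspike : ∀ t, s (t + 1) = if θ ≤ v t + I then 1 else 0)
    (hdyn : ∀ t, v (t + 1) = v t + I - θ * s (t + 1)) (t : ℕ) : v t ∈ Set.Ico 0 θ := by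
  induction t with
  | zero => exact ⟨hv0.ge, hv0 ▸ hθ⟩
  | succ t ih =>
    rw [hdyn t, hspike t]
    exact soft_reset_mem_Ico hI0 hIθ ih

lemma mul_sum_Icc_eq_sub {v s : ℕ → ℝ} {I θ : ℝ}
    (hdyn : ∀ t, v (t + 1) = v t + I - θ * s (t + 1)) (T : ℕ) :
    θ * ∑ t ∈ Icc 1 T, s t = T * I - (v T - v 0) := by
  induction T with
  | zero => simp
  | succ T ih =>
    rw [sum_Icc_succ_top (by omega), mul_add, ih, hdyn T]
    push_cast
    ring

/-- Constant-input soft-reset IF neuron: the firing rate `(θ/T)·Σ_{t=1}^T s[t]` converges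
to the input `I` as `T → ∞`. -/
theorem if_neuron_rate_tendsto (v s : ℕ → ℝ) (I θ : ℝ) (hθ : 0 < θ)
    (hI0 : 0 ≤ I) (hIθ : I ≤ θ) (hv0 : v 0 = 0)
    (hspike : ∀ t, s (t + 1) = if θ ≤ v t + I then 1 else 0)
    (hdyn : ∀ t, v (t + 1) = v t + I - θ * s (t + 1)) :
    Filter.Tendsto (fun T : ℕ => (θ / T) * ∑ t ∈ Finset.Icc 1 T, s t)
      Filter.atTop (nhds I) := by
  have hbound := potential_mem_Ico hθ hI0 hIθ hv0 hspike hdyn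
  have hvanish : Tendsto (fun T : ℕ => v T / T) atTop (𝓝 0) :=
    tendsto_bdd_div_atTop_nhds_zero (.of_forall fun T => (hbound T).1)
      (.of_forall fun T => (hbound T).2.le) tendsto_natCast_atTop_atTop
  have hrate : ∀ᶠ T : ℕ in atTop, I - v T / T = (θ / T) * ∑ t ∈ Icc 1 T, s t := by
    filter_upwards [eventually_ne_atTop 0] with T hT
    rw [div_mul_eq_mul_div, mul_sum_Icc_eq_sub hdyn, hv0]
    field_simp
    ring
  simpa using (tendsto_const_nhds.sub hvanish).congr' hrate
end

section
/- Let f : ℝ → [0,1] be nondecreasing and continuous with lim_{b→−∞} f(b) = 0 and lim_{b→+∞} f(b) = 1 (e.g., f(b) = E[H(X+b−1)] for X with continuous compactly supported distribution). For α ∈ (0,1) and step size 0 < c, the iteration b_{i+1} = b_i + c(α − f(b_i)) produces a bounded sequence (b_i). -/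
/-!
Above a level `U` with `α ≤ f U` the step never increases `b`, and below `U` it moves `b` up by
at most `c α`; so the orbit never exceeds `max (b 0) (U + c α)`. Symmetrically, below a level `L`
with `f L ≤ α` the step never decreases `b`, and the orbit stays above `min (b 0) (L - c (1 - α))`.
-/

section Orbit

variable {X : Type*} [LinearOrder X] {g : X → X} {b : ℕ → X} {K : X}

theorem le_max_of_forall_map_le_max (hg : ∀ x, g x ≤ max x K) (hb : ∀ n, b (n + 1) = g (b n)) :
    ∀ n, b n ≤ max (b 0) K
  | 0 => le_max_left _ _
  | n + 1 => (hb n).trans_le <|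
      (hg _).trans (max_le (le_max_of_forall_map_le_max hg hb n) (le_max_right _ _))

theorem min_le_of_forall_min_le_map (hg : ∀ x, min x K ≤ g x) (hb : ∀ n, b (n + 1) = g (b n)) :
    ∀ n, min (b 0) K ≤ b n :=
  le_max_of_forall_map_le_max (X := Xᵒᵈ) hg hb

end Orbit

section CalibrationStep

variable {f : ℝ → ℝ} {α c : ℝ}

theorem exists_calibrationStep_le_max (hmono : Monotone f) (hf : ∀ x, 0 ≤ f x) (hc : 0 ≤ c)
    {U : ℝ} (hU : α ≤ f U) : ∃ K, ∀ x, x + c * (α - f x) ≤ max x K := by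
  refine ⟨U + c * α, fun x => ?_⟩
  rcases le_total x U with hxU | hUx
  · have : c * (α - f x) ≤ c * α := mul_le_mul_of_nonneg_left (by linarith [hf x]) hc
    exact le_max_of_le_right (by linarith)
  · have : c * (α - f x) ≤ 0 := mul_nonpos_of_nonneg_of_nonpos hc (by linarith [hmono hUx])
    exact le_max_of_le_left (by linarith)

theorem exists_min_le_calibrationStep (hmono : Monotone f) (hf : ∀ x, f x ≤ 1) (hc : 0 ≤ c)
    {L : ℝ} (hL : f L ≤ α) : ∃ K, ∀ x, min x K ≤ x + c * (α - f x) := by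
  refine ⟨L - c * (1 - α), fun x => ?_⟩
  rcases le_total L x with hLx | hxL
  · have : c * (α - 1) ≤ c * (α - f x) := mul_le_mul_of_nonneg_left (by linarith [hf x]) hc
    exact min_le_of_right_le (by linarith)
  · have : 0 ≤ c * (α - f x) := mul_nonneg hc (by linarith [hmono hxL])
    exact min_le_of_left_le (by linarith)

end CalibrationStep

theorem ftbc_iteration_bounded_general (f : ℝ → ℝ)
    (hmono : Monotone f)
    (hrange : ∀ x, f x ∈ Set.Icc (0:ℝ) 1)
    (hbot : Filter.Tendsto f Filter.atBot (nhds 0))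
    (htop : Filter.Tendsto f Filter.atTop (nhds 1))
    (α : ℝ) (hα : α ∈ Set.Ioo (0:ℝ) 1)
    (c : ℝ) (hc : 0 < c)
    (b : ℕ → ℝ)
    (hiter : ∀ i, b (i + 1) = b i + c * (α - f (b i))) :
    ∃ M : ℝ, ∀ i, |b i| ≤ M := by
  obtain ⟨U, hU⟩ := (htop.eventually (lt_mem_nhds hα.2)).exists
  obtain ⟨L, hL⟩ := (hbot.eventually (gt_mem_nhds hα.1)).exists
  obtain ⟨Kup, hKup⟩ :=
    exists_calibrationStep_le_max hmono (fun x => (hrange x).1) hc.le hU.le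
  obtain ⟨Klow, hKlow⟩ :=
    exists_min_le_calibrationStep hmono (fun x => (hrange x).2) hc.le hL.le
  have hupper := le_max_of_forall_map_le_max hKup hiter
  have hlower := min_le_of_forall_min_le_map hKlow hiter
  exact ⟨_, fun i => abs_le_max_abs_abs (hlower i) (hupper i)⟩

/-- Boundedness of the forward calibration iteration for a continuous nondecreasing
`f : ℝ → [0,1]` with limits `0` at `-∞` and `1` at `+∞`. -/
theorem ftbc_iteration_bounded (f : ℝ → ℝ)
    (hmono : Monotone f) (hcont : Continuous f)
    (hrange : ∀ x, f x ∈ Set.Icc (0:ℝ) 1)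
    (hbot : Filter.Tendsto f Filter.atBot (nhds 0))
    (htop : Filter.Tendsto f Filter.atTop (nhds 1))
    (α : ℝ) (hα : α ∈ Set.Ioo (0:ℝ) 1)
    (c : ℝ) (hc : 0 < c)
    (b : ℕ → ℝ)
    (hiter : ∀ i, b (i + 1) = b i + c * (α - f (b i))) :
    ∃ M : ℝ, ∀ i, |b i| ≤ M :=
  ftbc_iteration_bounded_general f hmono hrange hbot htop α hα c hc b hiter
end
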